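/- Let X be a finite set with |X| = n ≥ 2, let C be a cluster system for X, and let A ⊆ X with |A| ≥ 2. Then the following four assertions are equivalent: (i) A belongs to the smallest weak patchwork containing C (equivalently, A belongs to every weak patchwork containing C); (ii) the incidence graph Γ(A;C), with vertex set A and an edge between distinct x, y ∈ A whenever there exists B ∈ C with {x, y} ⊆ B ⊆ A, is connected; (iii) there exist k < |A| and clusters A₁, …, A_k ∈ C with A = A₁ ∪ ⋯ ∪ A_k and (A₁ ∪ ⋯ ∪ A_{j−1}) ∦ A_j for all j = 2, …, k; (iv) A ∈ ext^{wk}_{n−1}(C). -/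

import Mathlib

/-- Two subsets `A`, `B` are compatible if `A ∩ B ∈ {∅, A, B}`. -/
def Compatible {α : Type*} [DecidableEq α] (A B : Finset α) : Prop :=
  A ∩ B = ∅ ∨ A ∩ B = A ∨ A ∩ B = B

/-- A cluster system: a collection of non-empty subsets of `X`. -/
def IsCS {α : Type*} [DecidableEq α] (C : Set (Finset α)) : Prop :=
  ∀ A ∈ C, A.Nonempty

/-- The adjoint `C*`: all non-empty subsets of `X` compatible with every member of `C`. -/
def adjS {α : Type*} [DecidableEq α] (C : Set (Finset α)) : Set (Finset α) :=
  {A | A.Nonempty ∧ ∀ B ∈ C, Compatible A B}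

/-- A hierarchy: a cluster system whose members are pairwise compatible. -/
def IsHierarchyS {α : Type*} [DecidableEq α] (C : Set (Finset α)) : Prop :=
  IsCS C ∧ ∀ A ∈ C, ∀ B ∈ C, Compatible A B

/-- A maximal hierarchy: a hierarchy not properly contained in any other hierarchy. -/
def IsMaxHierarchyS {α : Type*} [DecidableEq α] (H : Set (Finset α)) : Prop :=
  IsHierarchyS H ∧ ∀ D : Set (Finset α), IsHierarchyS D → H ⊆ D → D = H

/-- A weak patchwork: incompatible members have their union in the system. -/
def IsWeakPW {α : Type*} [DecidableEq α] (C : Set (Finset α)) : Prop :=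
  ∀ A ∈ C, ∀ B ∈ C, ¬Compatible A B → A ∪ B ∈ C

/-- A patchwork: incompatible members have both intersection and union in the system. -/
def IsPW {α : Type*} [DecidableEq α] (C : Set (Finset α)) : Prop :=
  ∀ A ∈ C, ∀ B ∈ C, ¬Compatible A B → A ∩ B ∈ C ∧ A ∪ B ∈ C

/-- A saturated patchwork: for incompatible members `A`, `B`, the five sets
`A ∩ B`, `A ∪ B`, `A - B`, `B - A`, `(A ∪ B) - (A ∩ B)` lie in the system. -/
def IsSatPW {α : Type*} [DecidableEq α] (C : Set (Finset α)) : Prop :=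
  ∀ A ∈ C, ∀ B ∈ C, ¬Compatible A B →
    A ∩ B ∈ C ∧ A ∪ B ∈ C ∧ A \ B ∈ C ∧ B \ A ∈ C ∧ (A ∪ B) \ (A ∩ B) ∈ C

/-- The trivial cluster system: all singletons together with `X` itself. -/
def CtrivS (α : Type*) [Fintype α] [DecidableEq α] : Set (Finset α) :=
  {A | (∃ x : α, A = {x}) ∨ A = Finset.univ}

/-- `C` is ample: for every arc `(C₂, C₁)` of the Hasse diagram (i.e. `C₂ ⊊ C₁`
with nothing of `C` strictly between), `C₁ - C₂ ∈ C`. -/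
def IsAmpleS {α : Type*} [DecidableEq α] (C : Set (Finset α)) : Prop :=
  ∀ C₁ ∈ C, ∀ C₂ ∈ C, C₂ ⊂ C₁ → (∀ B ∈ C, ¬(C₂ ⊂ B ∧ B ⊂ C₁)) → C₁ \ C₂ ∈ C

/-- The weak `k`-extensions of a cluster system. -/
def extWk {α : Type*} [DecidableEq α] (C : Set (Finset α)) : ℕ → Set (Finset α)
  | 0 => C
  | k + 1 => extWk C k ∪
      {D | ∃ A ∈ extWk C k, ∃ B ∈ extWk C k, ¬Compatible A B ∧ D = A ∪ B}

/-!
Every weak patchwork containing `C` is closed under the extension step, so (iv) ⇒ (i); and the sets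
whose incidence graph is connected form a weak patchwork containing `C`, since incompatible sets
meet, so (i) ⇒ (ii). For (ii) ⇒ (iii) a chained union `P ⊆ A` is grown greedily: a cluster inside
`A` crossing the boundary of `P` either contains `P` and replaces it, or is incompatible with `P`
and is appended; either way `P` gains a point, which keeps the number of clusters below `|P|`.
Finally (iii) ⇒ (iv) because the union of the first `j + 1` clusters lies in `ext^{wk}_j(C)`, and
`k ≤ |A| ≤ n`.
-/

section WeakPatchwork

variable {α : Type*} {C : Set (Finset α)}

open Finset

/-- The incidence graph `Γ(A;C)` with its vertex set enlarged to all of `α`: vertices outside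
`A` are isolated, so that the graphs for different `A` live on the same type. -/
def incidenceGraph (C : Set (Finset α)) (A : Finset α) : SimpleGraph α :=
  SimpleGraph.fromRel fun x y => ∃ B ∈ C, x ∈ B ∧ y ∈ B ∧ B ⊆ A

def IncidenceConnected (C : Set (Finset α)) (A : Finset α) : Prop :=
  ∀ x ∈ A, ∀ y ∈ A, (incidenceGraph C A).Reachable x y

lemma incidenceGraph_mono {A A' : Finset α} (h : A ⊆ A') :
    incidenceGraph C A ≤ incidenceGraph C A' := by
  rintro x y ⟨hxy, ⟨B, hB, hx, hy, hBA⟩ | ⟨B, hB, hy, hx, hBA⟩⟩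
  · exact ⟨hxy, .inl ⟨B, hB, hx, hy, hBA.trans h⟩⟩
  · exact ⟨hxy, .inr ⟨B, hB, hy, hx, hBA.trans h⟩⟩

lemma incidenceConnected_of_mem {B : Finset α} (hB : B ∈ C) : IncidenceConnected C B := by
  intro x hx y hy
  obtain rfl | hxy := eq_or_ne x y
  · rfl
  · exact SimpleGraph.Adj.reachable ⟨hxy, .inl ⟨B, hB, hx, hy, subset_rfl⟩⟩

lemma connected_fromRel_iff_incidenceConnected {A : Finset α} (hA : A.Nonempty) :
    (SimpleGraph.fromRel
      (fun x y : {z : α // z ∈ A} => ∃ B ∈ C, ↑x ∈ B ∧ ↑y ∈ B ∧ B ⊆ A)).Connected ↔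
    IncidenceConnected C A := by
  set Γ := SimpleGraph.fromRel
    (fun x y : {z : α // z ∈ A} => ∃ B ∈ C, ↑x ∈ B ∧ ↑y ∈ B ∧ B ⊆ A)
  constructor
  · intro hΓ x hx y hy
    let val : Γ →g incidenceGraph C A :=
      ⟨Subtype.val, fun {x y} ⟨hxy, h⟩ => ⟨Subtype.coe_ne_coe.mpr hxy, h⟩⟩
    exact (hΓ.preconnected ⟨x, hx⟩ ⟨y, hy⟩).map val
  · intro hA'
    have : Nonempty {z // z ∈ A} := hA.to_subtype
    refine ⟨fun ⟨x, hx⟩ ⟨y, hy⟩ => ?_⟩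
    obtain ⟨p⟩ := hA' x hx y hy
    induction p with
    | nil => rfl
    | @cons u v w huv _ ih =>
      obtain ⟨huv, ⟨B, hB, hu, hv, hBA⟩ | ⟨B, hB, hv, hu, hBA⟩⟩ := huv
      all_goals
        refine SimpleGraph.Reachable.trans ?_ (ih (hBA hv) hy)
        exact SimpleGraph.Adj.reachable ⟨Subtype.coe_ne_coe.mp huv, by tauto⟩

variable [DecidableEq α]

lemma not_compatible_iff {A B : Finset α} :
    ¬Compatible A B ↔ (A ∩ B).Nonempty ∧ ¬A ⊆ B ∧ ¬B ⊆ A := by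
  rw [Compatible, nonempty_iff_ne_empty, inter_eq_left, inter_eq_right]
  tauto

lemma IncidenceConnected.union {A₁ A₂ : Finset α} (h₁ : IncidenceConnected C A₁)
    (h₂ : IncidenceConnected C A₂) (hA : (A₁ ∩ A₂).Nonempty) :
    IncidenceConnected C (A₁ ∪ A₂) := by
  obtain ⟨z, hz⟩ := hA
  obtain ⟨hz₁, hz₂⟩ := mem_inter.mp hz
  have to_z : ∀ x ∈ A₁ ∪ A₂, (incidenceGraph C (A₁ ∪ A₂)).Reachable x z := by
    intro x hx
    rcases mem_union.mp hx with hx | hx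
    · exact (h₁ x hx z hz₁).mono (incidenceGraph_mono subset_union_left)
    · exact (h₂ x hx z hz₂).mono (incidenceGraph_mono subset_union_right)
  exact fun x hx y hy => (to_z x hx).trans (to_z y hy).symm

lemma isWeakPW_setOf_incidenceConnected : IsWeakPW {B | IncidenceConnected C B} :=
  fun _ h₁ _ h₂ hinc => h₁.union h₂ (not_compatible_iff.mp hinc).1

/-- The edge by which a path from `P` to `A \ P` leaves `P` lies in such a cluster. -/
lemma IncidenceConnected.exists_mem_crossing {A P : Finset α} (hA : IncidenceConnected C A)
    (hPA : P ⊆ A) (hP : P.Nonempty) (hAP : ¬A ⊆ P) :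
    ∃ B ∈ C, B ⊆ A ∧ (P ∩ B).Nonempty ∧ ¬B ⊆ P := by
  obtain ⟨x, hx⟩ := hP
  obtain ⟨y, hyA, hyP⟩ := not_subset.mp hAP
  obtain ⟨p⟩ := hA x (hPA hx) y hyA
  obtain ⟨⟨⟨a, b⟩, _, hrel⟩, -, ha, hb⟩ := p.exists_boundary_dart P hx hyP
  rcases hrel with ⟨B, hB, haB, hbB, hBA⟩ | ⟨B, hB, hbB, haB, hBA⟩
  all_goals exact ⟨B, hB, hBA, ⟨a, mem_inter.mpr ⟨ha, haB⟩⟩, fun h => hb (h hbB)⟩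

def IsChainedUnion (C : Set (Finset α)) (P : Finset α) : Prop :=
  ∃ (k : ℕ) (f : ℕ → Finset α), 0 < k ∧ k < P.card ∧ (∀ i < k, f i ∈ C) ∧
    P = (range k).sup f ∧ ∀ j, 1 ≤ j → j < k → ¬Compatible ((range j).sup f) (f j)

lemma isChainedUnion_of_mem {B : Finset α} (hB : B ∈ C) (hcard : 2 ≤ B.card) :
    IsChainedUnion C B :=
  ⟨1, fun _ => B, one_pos, hcard, fun _ _ => hB, by simp, fun _ _ _ => by omega⟩

lemma IsChainedUnion.union {P B : Finset α} (hP : IsChainedUnion C P) (hB : B ∈ C)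
    (hPB : ¬Compatible P B) : IsChainedUnion C (P ∪ B) := by
  obtain ⟨k, f, hk, hkP, hfC, rfl, hf⟩ := hP
  set g := Function.update f k B
  have hg : ∀ i < k, g i = f i := fun i hi => Function.update_of_ne hi.ne _ _
  have prefix_eq : ∀ j ≤ k, (range j).sup g = (range j).sup f := fun j hj =>
    sup_congr rfl fun i hi => hg i (by simp only [mem_range] at hi; omega)
  have hcard : ((range k).sup f).card < (((range k).sup f) ∪ B).card :=
    card_lt_card (left_lt_sup.mpr (not_compatible_iff.mp hPB).2.2)
  refine ⟨k + 1, g, k.succ_pos, by omega, fun i hi => ?_, ?_, fun j hj₁ hj => ?_⟩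
  · obtain hi | rfl := (Nat.lt_succ_iff.mp hi).lt_or_eq
    · exact hg i hi ▸ hfC i hi
    · simpa [g] using hB
  · have hgk : g k = B := Function.update_self k B f
    rw [range_add_one, sup_insert, hgk, prefix_eq k le_rfl, sup_eq_union, union_comm]
  · rw [prefix_eq j (by omega)]
    obtain hj | rfl := (Nat.lt_succ_iff.mp hj).lt_or_eq
    · exact hg j hj ▸ hf j hj₁ hj
    · simpa [g] using hPB

lemma IncidenceConnected.isChainedUnion {A : Finset α} (hA : IncidenceConnected C A)
    (hcard : 2 ≤ A.card) : IsChainedUnion C A := by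
  suffices grow : ∀ P, P.card ≤ A.card → P ⊆ A → IsChainedUnion C P → IsChainedUnion C A by
    obtain ⟨x, hx⟩ := card_pos.mp (by omega : 0 < A.card)
    have hAx : ¬A ⊆ {x} := fun h => by
      have := card_le_card h
      rw [card_singleton] at this
      omega
    obtain ⟨B, hB, hBA, ⟨z, hz⟩, hBx⟩ :=
      hA.exists_mem_crossing (singleton_subset_iff.mpr hx) (singleton_nonempty x) hAx
    obtain ⟨rfl, hxB⟩ := by simpa only [mem_inter, mem_singleton] using hz
    obtain ⟨y, hyB, hyx⟩ := not_subset.mp hBx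
    have hB₂ : 1 < B.card := one_lt_card.mpr ⟨y, hyB, z, hxB, by simpa using hyx⟩
    exact grow B (card_le_card hBA) hBA (isChainedUnion_of_mem hB hB₂)
  refine strongDownwardInduction fun P ih _ hPA hP => ?_
  by_cases hAP : A ⊆ P
  · rwa [hPA.antisymm hAP] at hP
  have hP₀ : P.Nonempty := by
    obtain ⟨k, f, hk, hkP, -⟩ := hP
    exact card_pos.mp (by omega)
  obtain ⟨B, hB, hBA, hPB, hBP⟩ := hA.exists_mem_crossing hPA hP₀ hAP
  by_cases hPB' : P ⊆ B
  · have hPB'' : P ⊂ B := ssubset_of_subset_not_subset hPB' hBP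
    refine ih (card_le_card hBA) hPB'' hBA (isChainedUnion_of_mem hB ?_)
    obtain ⟨k, f, hk, hkP, -⟩ := hP
    have := card_lt_card hPB''
    omega
  · have hinc : ¬Compatible P B := not_compatible_iff.mpr ⟨hPB, hPB', hBP⟩
    exact ih (card_le_card (union_subset hPA hBA)) (left_lt_sup.mpr hBP)
      (union_subset hPA hBA) (hP.union hB hinc)

lemma extWk_mono : Monotone (extWk C) :=
  monotone_nat_of_le_succ fun _ => Set.subset_union_left

lemma extWk_subset_of_isWeakPW {D : Set (Finset α)} (hD : IsWeakPW D) (hCD : C ⊆ D) (m : ℕ) :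
    extWk C m ⊆ D := by
  induction m with
  | zero => exact hCD
  | succ m ih =>
    rintro _ (h | ⟨A, hA, B, hB, hAB, rfl⟩)
    · exact ih h
    · exact hD A (ih hA) B (ih hB) hAB

lemma IsChainedUnion.mem_extWk {A : Finset α} (hA : IsChainedUnion C A) :
    A ∈ extWk C (A.card - 1) := by
  obtain ⟨k, f, hk, hkA, hfC, rfl, hf⟩ := hA
  have prefix_mem : ∀ j < k, (range (j + 1)).sup f ∈ extWk C j := by
    intro j
    induction j with
    | zero => simpa [extWk] using hfC 0
    | succ j ih =>
      intro hj
      refine Or.inr ⟨_, ih (by omega), f (j + 1), extWk_mono j.zero_le (hfC _ hj),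
        hf (j + 1) j.succ_pos hj, ?_⟩
      rw [range_add_one, sup_insert, sup_eq_union, union_comm]
  exact extWk_mono (by omega) (Nat.sub_add_cancel hk ▸ prefix_mem (k - 1) (by omega))

end WeakPatchwork

theorem stmt16_general {α : Type*} [Fintype α] [DecidableEq α] (n : ℕ)
    (hcard : Fintype.card α = n) (C : Set (Finset α))
    (A : Finset α) (hA : 2 ≤ A.card) :
    [(∀ D : Set (Finset α), IsWeakPW D → C ⊆ D → A ∈ D),
     (SimpleGraph.fromRel
        (fun x y : {z : α // z ∈ A} => ∃ B ∈ C, ↑x ∈ B ∧ ↑y ∈ B ∧ B ⊆ A)).Connected,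
     (∃ (k : ℕ) (f : ℕ → Finset α), 0 < k ∧ k < A.card ∧ (∀ i < k, f i ∈ C) ∧
        A = (Finset.range k).sup f ∧
        ∀ j, 1 ≤ j → j < k → ¬Compatible ((Finset.range j).sup f) (f j)),
     A ∈ extWk C (n - 1)].TFAE := by
  have hA₀ : A.Nonempty := Finset.card_pos.mp (by omega)
  tfae_have 1 → 2 := fun h => (connected_fromRel_iff_incidenceConnected hA₀).mpr <|
    h _ isWeakPW_setOf_incidenceConnected fun _ => incidenceConnected_of_mem
  tfae_have 2 → 3 := fun h =>
    ((connected_fromRel_iff_incidenceConnected hA₀).mp h).isChainedUnion hA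
  tfae_have 3 → 4 := fun h => extWk_mono (by have := hcard ▸ A.card_le_univ; omega)
    (IsChainedUnion.mem_extWk h)
  tfae_have 4 → 1 := fun h D hD hCD => extWk_subset_of_isWeakPW hD hCD (n - 1) h
  tfae_finish

/-- For `|X| = n ≥ 2`, a cluster system `C` and `A ⊆ X` with `|A| ≥ 2`, the following
are equivalent: (i) `A` lies in every weak patchwork containing `C`; (ii) the incidence
graph `Γ(A;C)` is connected; (iii) `A` is a union `A₁ ∪ ⋯ ∪ A_k` of `k < |A|` clusters
of `C` whose successive prefix unions are incompatible with the next cluster;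
(iv) `A ∈ ext^{wk}_{n-1}(C)`. -/
theorem stmt16 {α : Type*} [Fintype α] [DecidableEq α] (n : ℕ) (hn : 2 ≤ n)
    (hcard : Fintype.card α = n) (C : Set (Finset α)) (hC : IsCS C)
    (A : Finset α) (hA : 2 ≤ A.card) :
    [(∀ D : Set (Finset α), IsWeakPW D → C ⊆ D → A ∈ D),
     (SimpleGraph.fromRel
        (fun x y : {z : α // z ∈ A} => ∃ B ∈ C, ↑x ∈ B ∧ ↑y ∈ B ∧ B ⊆ A)).Connected,
     (∃ (k : ℕ) (f : ℕ → Finset α), 0 < k ∧ k < A.card ∧ (∀ i < k, f i ∈ C) ∧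
        A = (Finset.range k).sup f ∧
        ∀ j, 1 ≤ j → j < k → ¬Compatible ((Finset.range j).sup f) (f j)),
     A ∈ extWk C (n - 1)].TFAE :=
  stmt16_general n hcard C A hA
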